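/- Assume K ≥ 2, L ≥ 1 and 0 < c < 1/((K+1)² · (log(K+1))²). Then for every item i and every item l with l ≠ i and l ∉ { P i k : k : Fin K }, the truncated personalized PageRank value satisfies Ŝ_i l < (1−c) · c / (D · log(K+1)). -/

import Mathlib

/-!
Write `Ŝ_i l = (1 - c) ∑_{k ≤ L} c ^ k (Ã ^ k) i l`. Since `l ≠ i` and `l` is not recommended on
the page of `i`, the terms `k = 0, 1` vanish. The matrix `Ã` is row-stochastic and, by injectivity
of `P i`, each of its entries is at most `1 / (D log 2)`; a convex combination of rows keeps this
bound, so every entry of `Ã ^ k` with `k ≥ 1` is at most `1 / (D log 2)`. Summing the geometric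
tail gives `Ŝ_i l ≤ c ^ 2 / (D log 2)`, and the smallness of `c` is exactly what makes
`c log (K + 1) < (1 - c) log 2`.
-/

open Finset Matrix

/-- The normalizing constant `D = ∑_{r=1}^{K} 1 / log (r+1)`. -/
noncomputable def Dconst (K : ℕ) : ℝ := ∑ r ∈ Finset.Icc 1 K, 1 / Real.log ((r : ℝ) + 1)

/-- The weighted adjacency matrix of the recommendation network: `A i j = 1 / log (k+2)` if
`P i k = j` for some (necessarily unique, by injectivity) rank `k : Fin K`, and `0` otherwise. -/
noncomputable def adj {n K : ℕ} (P : Fin n → Fin K → Fin n) :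
    Matrix (Fin n) (Fin n) ℝ := fun i j =>
  ∑ k : Fin K, if P i k = j then 1 / Real.log (((k : ℕ) : ℝ) + 2) else 0

/-- The row-normalized adjacency matrix `Ã = D⁻¹ • A`. -/
noncomputable def normAdj {n K : ℕ} (P : Fin n → Fin K → Fin n) :
    Matrix (Fin n) (Fin n) ℝ :=
  (Dconst K)⁻¹ • adj P

/-- The truncated personalized PageRank vector
`Ŝ_i = (1-c) • ((∑_{k=0}^{L} (c • Ãᵀ)^k) *ᵥ e_i)`. -/
noncomputable def pprTrunc {n K : ℕ} (P : Fin n → Fin K → Fin n) (c : ℝ) (L : ℕ)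
    (i : Fin n) : Fin n → ℝ :=
  (1 - c) • ((∑ k ∈ Finset.range (L + 1), (c • (normAdj P)ᵀ) ^ k) *ᵥ Pi.single i 1)

namespace Matrix

variable {n R : Type*} [Fintype n] [DecidableEq n]

theorem pow_succ_apply_le_of_mem_rowStochastic [Semiring R] [PartialOrder R] [IsOrderedRing R]
    {M : Matrix n n R} (hM : M ∈ rowStochastic R n) {b : R} (hb : ∀ i j, M i j ≤ b)
    (k : ℕ) (i j : n) : (M ^ (k + 1)) i j ≤ b := by
  have hMk : M ^ k ∈ rowStochastic R n := pow_mem hM k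
  calc (M ^ (k + 1)) i j = ∑ t, (M ^ k) i t * M t j := by rw [pow_succ, mul_apply]
    _ ≤ ∑ t, (M ^ k) i t * b :=
      sum_le_sum fun t _ => mul_le_mul_of_nonneg_left (hb t j) (nonneg_of_mem_rowStochastic hMk)
    _ = b := by rw [← sum_mul, sum_row_of_mem_rowStochastic hMk, one_mul]

/-- Only walks of length at least two reach `l` from `i`, so the series starts at `c ^ 2`. -/
theorem sum_pow_mul_pow_apply_le_of_mem_rowStochastic
    [Field R] [LinearOrder R] [IsStrictOrderedRing R]
    {M : Matrix n n R} (hM : M ∈ rowStochastic R n) {b : R} (hb : ∀ i j, M i j ≤ b)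
    {i l : n} (hli : l ≠ i) (hil : M i l = 0) {c : R} (hc0 : 0 ≤ c) (hc1 : c < 1) (N : ℕ) :
    ∑ k ∈ range N, c ^ k * (M ^ k) i l ≤ b * c ^ 2 / (1 - c) := by
  have hb0 : 0 ≤ b := (nonneg_of_mem_rowStochastic hM).trans (hb i i)
  have hvanish : ∀ k ∈ range N, k ∉ Ico 2 N → c ^ k * (M ^ k) i l = 0 := by
    intro k hk hk2
    obtain rfl | rfl : k = 0 ∨ k = 1 := by simp only [mem_range, mem_Ico] at hk hk2; omega
    · simp [hli.symm]
    · simp [hil]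
  calc ∑ k ∈ range N, c ^ k * (M ^ k) i l = ∑ k ∈ Ico 2 N, c ^ k * (M ^ k) i l :=
        (sum_subset (fun k hk => mem_range.2 (mem_Ico.1 hk).2) hvanish).symm
    _ ≤ ∑ k ∈ Ico 2 N, b * c ^ k := by
        refine sum_le_sum fun k hk => ?_
        obtain ⟨m, rfl⟩ : ∃ m, k = m + 1 := ⟨k - 1, by have := (mem_Ico.1 hk).1; omega⟩
        rw [mul_comm b]
        exact mul_le_mul_of_nonneg_left (pow_succ_apply_le_of_mem_rowStochastic hM hb m i l)
          (pow_nonneg hc0 _)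
    _ = b * ∑ k ∈ Ico 2 N, c ^ k := (mul_sum _ _ _).symm
    _ ≤ b * (c ^ 2 / (1 - c)) :=
        mul_le_mul_of_nonneg_left (geom_sum_Ico_le_of_lt_one hc0 hc1) hb0
    _ = b * c ^ 2 / (1 - c) := (mul_div_assoc _ _ _).symm

end Matrix

section Recommender

variable {n K : ℕ}

theorem Dconst_pos (hK : 0 < K) : 0 < Dconst K :=
  sum_pos (fun r hr => one_div_pos.2 <| Real.log_pos <| by
      have : (1 : ℝ) ≤ r := by exact_mod_cast (mem_Icc.1 hr).1
      linarith)
    ⟨1, mem_Icc.2 ⟨le_rfl, hK⟩⟩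

theorem adj_nonneg (P : Fin n → Fin K → Fin n) (i j : Fin n) : 0 ≤ adj P i j :=
  sum_nonneg fun k _ => by
    split_ifs
    · exact one_div_nonneg.2 (Real.log_nonneg (by linarith [(k : ℕ).cast_nonneg (α := ℝ)]))
    · exact le_rfl

theorem adj_le_one_div_log_two (P : Fin n → Fin K → Fin n) (hinj : ∀ i, Function.Injective (P i))
    (i j : Fin n) : adj P i j ≤ 1 / Real.log 2 := by
  have hcard : #{k | P i k = j} ≤ 1 :=
    card_le_one.2 fun a ha b hb => hinj i ((mem_filter.1 ha).2.trans (mem_filter.1 hb).2.symm)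
  calc adj P i j ≤ ∑ k : Fin K, if P i k = j then 1 / Real.log 2 else 0 := by
        refine sum_le_sum fun k _ => ?_
        split_ifs
        · gcongr
          linarith [(k : ℕ).cast_nonneg (α := ℝ)]
        · exact le_rfl
    _ = #{k | P i k = j} * (1 / Real.log 2) := by rw [← sum_filter, sum_const, nsmul_eq_mul]
    _ ≤ 1 * (1 / Real.log 2) := by gcongr; exact_mod_cast hcard
    _ = 1 / Real.log 2 := one_mul _

theorem sum_adj_eq_Dconst (P : Fin n → Fin K → Fin n) (i : Fin n) :
    ∑ j, adj P i j = Dconst K := by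
  unfold adj
  rw [sum_comm]
  simp only [sum_ite_eq, mem_univ, if_true]
  rw [Fin.sum_univ_eq_sum_range (fun k => 1 / Real.log ((k : ℝ) + 2)), Dconst,
    ← Ico_add_one_right_eq_Icc, sum_Ico_eq_sum_range, Nat.add_sub_cancel]
  refine sum_congr rfl fun k _ => ?_
  push_cast
  ring_nf

theorem normAdj_mem_rowStochastic (P : Fin n → Fin K → Fin n) (hK : 0 < K) :
    normAdj P ∈ rowStochastic ℝ (Fin n) := by
  refine mem_rowStochastic_iff_sum.2 ⟨fun i j => ?_, fun i => ?_⟩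
  · exact mul_nonneg (inv_nonneg.2 (Dconst_pos hK).le) (adj_nonneg P i j)
  · simp only [normAdj, Matrix.smul_apply, smul_eq_mul, ← mul_sum, sum_adj_eq_Dconst]
    exact inv_mul_cancel₀ (Dconst_pos hK).ne'

theorem normAdj_le (P : Fin n → Fin K → Fin n) (hK : 0 < K) (hinj : ∀ i, Function.Injective (P i))
    (i j : Fin n) : normAdj P i j ≤ (Dconst K * Real.log 2)⁻¹ := by
  rw [mul_inv, ← one_div (Real.log 2)]
  exact mul_le_mul_of_nonneg_left (adj_le_one_div_log_two P hinj i j)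
    (inv_nonneg.2 (Dconst_pos hK).le)

theorem normAdj_apply_eq_zero (P : Fin n → Fin K → Fin n) {i l : Fin n}
    (hl : ∀ k : Fin K, P i k ≠ l) : normAdj P i l = 0 := by
  simp [normAdj, adj, hl]

theorem pprTrunc_apply (P : Fin n → Fin K → Fin n) (c : ℝ) (L : ℕ) (i l : Fin n) :
    pprTrunc P c L i l = (1 - c) * ∑ k ∈ range (L + 1), c ^ k * (normAdj P ^ k) i l := by
  simp [pprTrunc, mulVec_single, Matrix.sum_apply, smul_pow, ← transpose_pow]

theorem mul_log_lt_one_sub_mul_log_two (hK : 2 ≤ K) {c : ℝ} (hc0 : 0 < c)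
    (hc1 : c < 1 / (((K : ℝ) + 1) ^ 2 * Real.log ((K : ℝ) + 1) ^ 2)) :
    c * Real.log ((K : ℝ) + 1) < (1 - c) * Real.log 2 := by
  set x : ℝ := (K : ℝ) + 1
  set ℓ := Real.log x
  have hx : 3 ≤ x := by simp only [x]; linarith [(Nat.ofNat_le_cast (α := ℝ)).2 hK]
  have hℓ : 1 < ℓ := (Real.lt_log_iff_exp_lt (by linarith)).2 (Real.exp_one_lt_three.trans_le hx)
  have hc : c * (x ^ 2 * ℓ ^ 2) < 1 := (lt_div_iff₀ (by positivity)).1 hc1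
  have hcℓ : 9 * (c * ℓ) < 1 := by
    calc 9 * (c * ℓ) ≤ x ^ 2 * (c * ℓ) := by gcongr; nlinarith
      _ ≤ x ^ 2 * (c * ℓ) * ℓ := le_mul_of_one_le_right (by positivity) hℓ.le
      _ = c * (x ^ 2 * ℓ ^ 2) := by ring
      _ < 1 := hc
  have hc_lt : c < c * ℓ := lt_mul_of_one_lt_right hc0 hℓ
  have hlog2 : c * Real.log 2 ≤ c :=
    mul_le_of_le_one_right hc0.le (by linarith [Real.log_two_lt_d9])
  linarith [Real.log_two_gt_d9]

end Recommender

theorem pprTrunc_upper_bound_unrecommended_general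
    (n K : ℕ) (hK : 2 ≤ K) (P : Fin n → Fin K → Fin n)
    (hinj : ∀ i, Function.Injective (P i))
    (c : ℝ) (L : ℕ)
    (hc0 : 0 < c)
    (hc1 : c < 1 / (((K : ℝ) + 1) ^ 2 * Real.log ((K : ℝ) + 1) ^ 2))
    (i l : Fin n) (hli : l ≠ i) (hl : ∀ k : Fin K, P i k ≠ l) :
    pprTrunc P c L i l < (1 - c) * c / (Dconst K * Real.log ((K : ℝ) + 1)) := by
  have hK0 : 0 < K := by omega
  have hkey := mul_log_lt_one_sub_mul_log_two hK hc0 hc1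
  have hD := Dconst_pos hK0
  have hlog2 : 0 < Real.log 2 := Real.log_pos one_lt_two
  have hlogK : 0 < Real.log ((K : ℝ) + 1) := Real.log_pos (by norm_cast; omega)
  have hc : c < 1 :=
    sub_pos.1 (pos_of_mul_pos_left ((mul_pos hc0 hlogK).trans hkey) hlog2.le)
  calc pprTrunc P c L i l
      ≤ (1 - c) * ((Dconst K * Real.log 2)⁻¹ * c ^ 2 / (1 - c)) := by
        rw [pprTrunc_apply]
        exact mul_le_mul_of_nonneg_left (sum_pow_mul_pow_apply_le_of_mem_rowStochastic
          (normAdj_mem_rowStochastic P hK0) (normAdj_le P hK0 hinj) hli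
          (normAdj_apply_eq_zero P hl) hc0.le hc _) (by linarith)
    _ = c * c / (Dconst K * Real.log 2) := by field_simp [(sub_pos.2 hc).ne']
    _ < (1 - c) * c / (Dconst K * Real.log ((K : ℝ) + 1)) := by
        rw [div_lt_div_iff₀ (by positivity) (by positivity)]
        linarith [mul_lt_mul_of_pos_left hkey (mul_pos hc0 hD)]

/-- Upper bound on the truncated personalized PageRank value of an item that is neither the
source item nor one of the provider's recommendations:
`Ŝ_i l < (1-c) · c / (D · log (K+1))`. -/
theorem pprTrunc_upper_bound_unrecommended
    (n K : ℕ) (hK : 2 ≤ K) (P : Fin n → Fin K → Fin n)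
    (hinj : ∀ i, Function.Injective (P i))
    (hne : ∀ i k, P i k ≠ i)
    (c : ℝ) (L : ℕ) (hL : 1 ≤ L)
    (hc0 : 0 < c)
    (hc1 : c < 1 / (((K : ℝ) + 1) ^ 2 * Real.log ((K : ℝ) + 1) ^ 2))
    (i l : Fin n) (hli : l ≠ i) (hl : ∀ k : Fin K, P i k ≠ l) :
    pprTrunc P c L i l < (1 - c) * c / (Dconst K * Real.log ((K : ℝ) + 1)) :=
  pprTrunc_upper_bound_unrecommended_general n K hK P hinj c L hc0 hc1 i l hli hl
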